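/- Under the LATE assumptions plus outcome monotonicity, if Pr(G=ca) > 0 then the characteristics of group G=ca are identified: E[h(X) | D1>D0, Y0=Y1=1] = (E[(1−D)Y·h(X) | Z=1] − E[(1−D)Y·h(X) | Z=0]) / (E[(1−D)Y | Z=1] − E[(1−D)Y | Z=0]). -/

import Mathlib

open MeasureTheory ProbabilityTheory

/-- Conditional mean of `f` given event `s`. -/
noncomputable def cmean {Ω : Type} [MeasurableSpace Ω] (μ : Measure Ω)
    (f : Ω → ℝ) (s : Set Ω) : ℝ :=
  (∫ ω in s, f ω ∂μ) / (μ s).toReal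

/-!
On the arm `Z = z` the untreated outcome `(1 - D) * Y` equals `(1 - D_z) * Y0`, a function of
`(X, Y0, D_z)`, so by independence its conditional mean weighted by `h(X)` is the unconditional
mean `E[(1 - D_z) Y0 h(X)]`. The contrast between the arms is therefore `-E[(D1 - D0) Y0 h(X)]`,
and by the two monotonicity assumptions `(D1 - D0) Y0` is almost surely the indicator of the
group `ca`. Dividing the contrast for `h` by the contrast for `1` gives the conditional mean.
-/

theorem ProbabilityTheory.IndepFun.setIntegral_preimage {Ω β : Type*} [MeasurableSpace Ω]
    [MeasurableSpace β] {μ : Measure Ω} {f : Ω → ℝ} {Z : Ω → β} (hfZ : IndepFun f Z μ)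
    (hf : AEStronglyMeasurable f μ) (hZ : Measurable Z) {t : Set β} (ht : MeasurableSet t) :
    ∫ ω in Z ⁻¹' t, f ω ∂μ = (∫ ω, f ω ∂μ) * μ.real (Z ⁻¹' t) := by
  have hind : Measurable (t.indicator (1 : β → ℝ)) := measurable_one.indicator ht
  calc ∫ ω in Z ⁻¹' t, f ω ∂μ = ∫ ω, f ω * (t.indicator 1 ∘ Z) ω ∂μ := by
        rw [← integral_indicator (hZ ht)]
        congr 1 with ω
        by_cases hω : Z ω ∈ t <;> simp [hω]
    _ = (∫ ω, f ω ∂μ) * ∫ ω, (Z ⁻¹' t).indicator 1 ω ∂μ :=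
        (hfZ.comp measurable_id hind).integral_fun_mul_eq_mul_integral hf
          (hind.comp hZ).aestronglyMeasurable
    _ = (∫ ω, f ω ∂μ) * μ.real (Z ⁻¹' t) := by rw [integral_indicator_one (hZ ht)]

theorem cmean_congr {Ω : Type} [MeasurableSpace Ω] {μ : Measure Ω} {f g : Ω → ℝ} {s : Set Ω}
    (hs : MeasurableSet s) (hfg : Set.EqOn f g s) : cmean μ f s = cmean μ g s := by
  rw [cmean, cmean, setIntegral_congr_fun hs hfg]

theorem cmean_preimage_of_indepFun {Ω : Type} {β : Type*} [MeasurableSpace Ω] [MeasurableSpace β]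
    {μ : Measure Ω} [IsFiniteMeasure μ] {f : Ω → ℝ} {Z : Ω → β} (hfZ : IndepFun f Z μ)
    (hf : AEStronglyMeasurable f μ) (hZ : Measurable Z) {t : Set β} (ht : MeasurableSet t)
    (ht0 : μ (Z ⁻¹' t) ≠ 0) : cmean μ f (Z ⁻¹' t) = ∫ ω, f ω ∂μ := by
  rw [cmean, hfZ.setIntegral_preimage hf hZ ht, ← Measure.real_def,
    mul_div_cancel_right₀ _ ((measureReal_ne_zero_iff).2 ht0)]

theorem one_sub_mul_switch {d a b : ℝ} (hd : d = 0 ∨ d = 1) :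
    (1 - d) * (d * a + (1 - d) * b) = (1 - d) * b := by
  rcases hd with rfl | rfl <;> ring

theorem sub_mul_eq_ite_of_binary {d0 d1 y0 y1 : ℝ} (hd0 : d0 = 0 ∨ d0 = 1)
    (hd1 : d1 = 0 ∨ d1 = 1) (hy0 : y0 = 0 ∨ y0 = 1) (hy1 : y1 = 0 ∨ y1 = 1) (hd : d0 ≤ d1)
    (hy : y0 ≤ y1) : (d1 - d0) * y0 = if d0 < d1 ∧ y0 = 1 ∧ y1 = 1 then 1 else 0 := by
  rcases hd0 with rfl | rfl <;> rcases hd1 with rfl | rfl <;> rcases hy0 with rfl | rfl <;>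
    rcases hy1 with rfl | rfl <;> revert hd hy <;> norm_num

section LATE

variable {Ω : Type} [MeasurableSpace Ω] {μ : Measure Ω}
  {Z D0 D1 Y0 Y1 D Y X : Ω → ℝ}

theorem cmean_untreated_outcome_eq_integral [IsFiniteMeasure μ] {Dc : Ω → ℝ} {c : ℝ} {k : ℝ → ℝ}
    (hindep : IndepFun (fun ω => (X ω, Y0 ω, Dc ω)) Z μ) (hZm : Measurable Z)
    (hXm : Measurable X) (hY0m : Measurable Y0) (hDcm : Measurable Dc) (hk : Measurable k)
    (hc : μ {ω | Z ω = c} ≠ 0) (hDcbin : ∀ ω, Dc ω = 0 ∨ Dc ω = 1)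
    (hD : ∀ ω, Z ω = c → D ω = Dc ω) (hY : ∀ ω, Y ω = D ω * Y1 ω + (1 - D ω) * Y0 ω) :
    cmean μ (fun ω => (1 - D ω) * Y ω * k (X ω)) {ω | Z ω = c}
      = ∫ ω, (1 - Dc ω) * Y0 ω * k (X ω) ∂μ := by
  have hmeas : MeasurableSet {ω | Z ω = c} := hZm (measurableSet_singleton c)
  rw [cmean_congr hmeas (g := fun ω => (1 - Dc ω) * Y0 ω * k (X ω)) fun ω hω => by
    rw [hY, hD ω hω, one_sub_mul_switch (hDcbin ω)]]
  exact cmean_preimage_of_indepFun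
    (hindep.comp (φ := fun p => (1 - p.2.2) * p.2.1 * k p.1) (by fun_prop) measurable_id)
    (by fun_prop) hZm (measurableSet_singleton c) hc

theorem integral_untreated_sub_eq_neg_setIntegral {w : Ω → ℝ} (hw : Integrable w μ)
    (hD0m : Measurable D0) (hD1m : Measurable D1) (hY0m : Measurable Y0) (hY1m : Measurable Y1)
    (hD0bin : ∀ ω, D0 ω = 0 ∨ D0 ω = 1) (hD1bin : ∀ ω, D1 ω = 0 ∨ D1 ω = 1)
    (hY0bin : ∀ ω, Y0 ω = 0 ∨ Y0 ω = 1) (hY1bin : ∀ ω, Y1 ω = 0 ∨ Y1 ω = 1)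
    (hmonoD : ∀ᵐ ω ∂μ, D0 ω ≤ D1 ω) (hmonoY : ∀ᵐ ω ∂μ, Y0 ω ≤ Y1 ω) :
    ∫ ω, (1 - D1 ω) * Y0 ω * w ω ∂μ - ∫ ω, (1 - D0 ω) * Y0 ω * w ω ∂μ
      = -∫ ω in {ω | D0 ω < D1 ω ∧ Y0 ω = 1 ∧ Y1 ω = 1}, w ω ∂μ := by
  have hint : ∀ {Dc : Ω → ℝ}, Measurable Dc → (∀ ω, Dc ω = 0 ∨ Dc ω = 1) →
      Integrable (fun ω => (1 - Dc ω) * Y0 ω * w ω) μ := fun hDcm hDcbin =>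
    hw.bdd_mul (c := 1) (by fun_prop) (ae_of_all _ fun ω => by
      rcases hDcbin ω with h | h <;> rcases hY0bin ω with h' | h' <;> norm_num [h, h'])
  have hca : MeasurableSet {ω | D0 ω < D1 ω ∧ Y0 ω = 1 ∧ Y1 ω = 1} :=
    (measurableSet_lt hD0m hD1m).inter
      ((hY0m (measurableSet_singleton 1)).inter (hY1m (measurableSet_singleton 1)))
  rw [← neg_sub, ← integral_sub (hint hD0m hD0bin) (hint hD1m hD1bin), ← integral_indicator hca]
  congr 1
  refine integral_congr_ae ?_
  filter_upwards [hmonoD, hmonoY] with ω hd hy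
  calc (1 - D0 ω) * Y0 ω * w ω - (1 - D1 ω) * Y0 ω * w ω = (D1 ω - D0 ω) * Y0 ω * w ω := by ring
    _ = _ := by
      rw [sub_mul_eq_ite_of_binary (hD0bin ω) (hD1bin ω) (hY0bin ω) (hY1bin ω) hd hy,
        Set.indicator_apply]
      split_ifs <;> simp_all

end LATE

theorem ca_group_characteristics_general
{Ω : Type} [MeasurableSpace Ω] (μ : Measure Ω) [IsProbabilityMeasure μ]
    (Z D0 D1 Y0 Y1 D Y : Ω → ℝ)
    (hZm : Measurable Z) (hD0m : Measurable D0) (hD1m : Measurable D1)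
    (hY0m : Measurable Y0) (hY1m : Measurable Y1)
    (hZbin : ∀ ω, Z ω = 0 ∨ Z ω = 1)
    (hD0bin : ∀ ω, D0 ω = 0 ∨ D0 ω = 1)
    (hD1bin : ∀ ω, D1 ω = 0 ∨ D1 ω = 1)
    (hY0bin : ∀ ω, Y0 ω = 0 ∨ Y0 ω = 1)
    (hY1bin : ∀ ω, Y1 ω = 0 ∨ Y1 ω = 1)
    (hD : ∀ ω, D ω = Z ω * D1 ω + (1 - Z ω) * D0 ω)
    (hY : ∀ ω, Y ω = D ω * Y1 ω + (1 - D ω) * Y0 ω)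
    (hz0 : 0 < μ {ω | Z ω = 1}) (hz1 : μ {ω | Z ω = 1} < 1)
    (hmonoD : ∀ᵐ ω ∂μ, D0 ω ≤ D1 ω)
    (hmonoY : ∀ᵐ ω ∂μ, Y0 ω ≤ Y1 ω)
    (X : Ω → ℝ) (hXm : Measurable X) (h : ℝ → ℝ) (hhm : Measurable h)
    (hint : Integrable (fun ω => h (X ω)) μ)
    (hindep : IndepFun (fun ω => (X ω, Y0 ω, Y1 ω, D0 ω, D1 ω)) Z μ) :
    cmean μ (fun ω => h (X ω)) {ω | D0 ω < D1 ω ∧ Y0 ω = 1 ∧ Y1 ω = 1}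
      = (cmean μ (fun ω => (1 - D ω) * Y ω * h (X ω)) {ω | Z ω = 1}
          - cmean μ (fun ω => (1 - D ω) * Y ω * h (X ω)) {ω | Z ω = 0})
        / (cmean μ (fun ω => (1 - D ω) * Y ω) {ω | Z ω = 1}
          - cmean μ (fun ω => (1 - D ω) * Y ω) {ω | Z ω = 0}) := by
  have hZ0 : μ {ω | Z ω = 0} ≠ 0 := by
    have hcompl : {ω | Z ω = 0} = {ω | Z ω = 1}ᶜ := by
      ext ω; rcases hZbin ω with hz | hz <;> simp [hz]
    have hmeas : MeasurableSet {ω | Z ω = 1} := hZm (measurableSet_singleton 1)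
    rw [hcompl, prob_compl_eq_one_sub hmeas]
    exact (tsub_pos_of_lt hz1).ne'
  have hindep0 : IndepFun (fun ω => (X ω, Y0 ω, D0 ω)) Z μ :=
    hindep.comp (φ := fun p => (p.1, p.2.1, p.2.2.2.1)) (by fun_prop) measurable_id
  have hindep1 : IndepFun (fun ω => (X ω, Y0 ω, D1 ω)) Z μ :=
    hindep.comp (φ := fun p => (p.1, p.2.1, p.2.2.2.2)) (by fun_prop) measurable_id
  have hcontrast : ∀ k : ℝ → ℝ, Measurable k → Integrable (fun ω => k (X ω)) μ →
      cmean μ (fun ω => (1 - D ω) * Y ω * k (X ω)) {ω | Z ω = 1}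
        - cmean μ (fun ω => (1 - D ω) * Y ω * k (X ω)) {ω | Z ω = 0}
        = -∫ ω in {ω | D0 ω < D1 ω ∧ Y0 ω = 1 ∧ Y1 ω = 1}, k (X ω) ∂μ := fun k hk hki => by
    rw [cmean_untreated_outcome_eq_integral hindep1 hZm hXm hY0m hD1m hk hz0.ne' hD1bin
        (fun ω hz => by rw [hD, hz]; ring) hY,
      cmean_untreated_outcome_eq_integral hindep0 hZm hXm hY0m hD0m hk hZ0 hD0bin
        (fun ω hz => by rw [hD, hz]; ring) hY]
    exact integral_untreated_sub_eq_neg_setIntegral hki hD0m hD1m hY0m hY1m hD0bin hD1bin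
      hY0bin hY1bin hmonoD hmonoY
  have hden := hcontrast (fun _ => 1) measurable_const (integrable_const 1)
  simp only [mul_one, setIntegral_const, smul_eq_mul] at hden
  rw [cmean, hcontrast h hhm hint, hden, neg_div_neg_eq, Measure.real_def]

theorem ca_group_characteristics
{Ω : Type} [MeasurableSpace Ω] (μ : Measure Ω) [IsProbabilityMeasure μ]
    (Z D0 D1 Y0 Y1 D Y : Ω → ℝ)
    (hZm : Measurable Z) (hD0m : Measurable D0) (hD1m : Measurable D1)
    (hY0m : Measurable Y0) (hY1m : Measurable Y1)
    (hZbin : ∀ ω, Z ω = 0 ∨ Z ω = 1)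
    (hD0bin : ∀ ω, D0 ω = 0 ∨ D0 ω = 1)
    (hD1bin : ∀ ω, D1 ω = 0 ∨ D1 ω = 1)
    (hY0bin : ∀ ω, Y0 ω = 0 ∨ Y0 ω = 1)
    (hY1bin : ∀ ω, Y1 ω = 0 ∨ Y1 ω = 1)
    (hD : ∀ ω, D ω = Z ω * D1 ω + (1 - Z ω) * D0 ω)
    (hY : ∀ ω, Y ω = D ω * Y1 ω + (1 - D ω) * Y0 ω)
    (hz0 : 0 < μ {ω | Z ω = 1}) (hz1 : μ {ω | Z ω = 1} < 1)
    (hmonoD : ∀ᵐ ω ∂μ, D0 ω ≤ D1 ω)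
    (hmonoY : ∀ᵐ ω ∂μ, Y0 ω ≤ Y1 ω)
    (X : Ω → ℝ) (hXm : Measurable X) (h : ℝ → ℝ) (hhm : Measurable h)
    (hint : Integrable (fun ω => h (X ω)) μ)
    (hindep : IndepFun (fun ω => (X ω, Y0 ω, Y1 ω, D0 ω, D1 ω)) Z μ)
    (hca : 0 < μ {ω | D0 ω < D1 ω ∧ Y0 ω = 1 ∧ Y1 ω = 1}) :
    cmean μ (fun ω => h (X ω)) {ω | D0 ω < D1 ω ∧ Y0 ω = 1 ∧ Y1 ω = 1}
      = (cmean μ (fun ω => (1 - D ω) * Y ω * h (X ω)) {ω | Z ω = 1}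
          - cmean μ (fun ω => (1 - D ω) * Y ω * h (X ω)) {ω | Z ω = 0})
        / (cmean μ (fun ω => (1 - D ω) * Y ω) {ω | Z ω = 1}
          - cmean μ (fun ω => (1 - D ω) * Y ω) {ω | Z ω = 0}) :=
  ca_group_characteristics_general μ Z D0 D1 Y0 Y1 D Y hZm hD0m hD1m hY0m hY1m hZbin hD0bin hD1bin
    hY0bin hY1bin hD hY hz0 hz1 hmonoD hmonoY X hXm h hhm hint hindep
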